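/- Let A ⟶f B ⟶g C ⟶h A⟦1⟧ be a distinguished triangle in C. Then h factors through an object of N if and only if g is an epimorphism modulo N, i.e., for every morphism x: C ⟶ X, if x ∘ g factors through an object of N then x factors through an object of N. -/

import Mathlib

open CategoryTheory CategoryTheory.Limits CategoryTheory.Pretriangulated

universe v u v₂ u₂

variable {C : Type u} [Category.{v} C] [Preadditive C] [HasZeroObject C]
  [HasShift C ℤ] [∀ n : ℤ, (shiftFunctor C n).Additive] [Pretriangulated C]

/-- `f : X ⟶ Y` factors through an object of `N`. -/
def FactorsThru (N : Set C) {X Y : C} (f : X ⟶ Y) : Prop :=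
  ∃ (Z : C) (_ : Z ∈ N) (u : X ⟶ Z) (v : Z ⟶ Y), f = u ≫ v

/-- The morphism `X⟦-1⟧ ⟶ A` obtained from `h : X ⟶ A⟦1⟧` by shifting by `-1` and
composing with the canonical isomorphism `A⟦1⟧⟦-1⟧ ≅ A`. -/
noncomputable def descShift {X A : C} (h : X ⟶ A⟦(1:ℤ)⟧) : X⟦(-1:ℤ)⟧ ⟶ A :=
  h⟦(-1:ℤ)⟧' ≫ (shiftEquiv C (1:ℤ)).unitIso.inv.app A

/-- The class `S_N` of morphisms fitting in a distinguished triangle whose two other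
maps factor through `N`. -/
def SN (N : Set C) {B C₀ : C} (g : B ⟶ C₀) : Prop :=
  ∃ (A : C) (f : A ⟶ B) (h : C₀ ⟶ A⟦(1:ℤ)⟧),
    (Triangle.mk f g h ∈ distTriang C) ∧ FactorsThru N f ∧ FactorsThru N h

/-- The class `L`. -/
def ClassL (N : Set C) {A B : C} (f : A ⟶ B) : Prop :=
  ∃ (N₀ : C) (_ : N₀ ∈ N) (g : B ⟶ N₀) (h : N₀ ⟶ A⟦(1:ℤ)⟧),
    (Triangle.mk f g h ∈ distTriang C) ∧ FactorsThru N (descShift h)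

/-- The class `R`. -/
def ClassR (N : Set C) {B C₀ : C} (g : B ⟶ C₀) : Prop :=
  ∃ (N₀ : C) (_ : N₀ ∈ N) (f : N₀ ⟶ B) (h : C₀ ⟶ N₀⟦(1:ℤ)⟧),
    (Triangle.mk f g h ∈ distTriang C) ∧ FactorsThru N h

/-- Condition (Lex) on a morphism `h : C₀ ⟶ A⟦1⟧`. -/
def LexCond (N : Set C) {C₀ A : C} (h : C₀ ⟶ A⟦(1:ℤ)⟧) : Prop :=
  ∀ (N₀ : C), N₀ ∈ N → ∀ (x : N₀ ⟶ C₀), FactorsThru N (descShift (x ≫ h))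

/-- Condition (Rex) on a morphism `h : C₀ ⟶ A⟦1⟧`. -/
def RexCond (N : Set C) {C₀ A : C} (h : C₀ ⟶ A⟦(1:ℤ)⟧) : Prop :=
  ∀ (N₀ : C), N₀ ∈ N → ∀ (y : A ⟶ N₀),
    ∃ (M : C) (_ : M ∈ N) (u : C₀⟦(-1:ℤ)⟧ ⟶ M⟦(-1:ℤ)⟧) (v : M⟦(-1:ℤ)⟧ ⟶ N₀),
      descShift h ≫ y = u ≫ v

/-- `S_N` as a morphism property. -/
def SNProp (N : Set C) : MorphismProperty C := fun _ _ g => SN N g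

/-!
For `⇐`, take `x = h`: `g ≫ h = 0` factors through `N`.

For `⇒`, let `g ≫ x` factor through `b : M ⟶ X` with `M ∈ N`, and complete `b` to a
distinguished triangle `(b, c, δ)`. Comparing it with the rotated triangle of `(f, g, h)` gives
`x ≫ c = h ≫ φ`, which factors through `N`, say as `u ≫ w` through `Z`. The extension
`M ⟶ E ⟶ Z` classified by `w ≫ δ` lies in `N` and maps to `X` by some `π` over `w`; since
`u ≫ w ≫ δ = 0`, `u` lifts to `ρ : C₀ ⟶ E`. Then `(x - ρ ≫ π) ≫ c = 0`, so `x - ρ ≫ π`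
factors through `b`, and `x` factors through `E ⊞ M ∈ N`.
-/

namespace FactorsThru

variable {N : Set C} {X Y : C}

omit [Preadditive C] [HasZeroObject C] [HasShift C ℤ] [∀ n : ℤ, (shiftFunctor C n).Additive]
  [Pretriangulated C] in
theorem comp_right {f : X ⟶ Y} (hf : FactorsThru N f) {W : C} (k : Y ⟶ W) :
    FactorsThru N (f ≫ k) := by
  obtain ⟨Z, hZ, u, v, rfl⟩ := hf
  exact ⟨Z, hZ, u, v ≫ k, Category.assoc _ _ _⟩

omit [HasShift C ℤ] [∀ n : ℤ, (shiftFunctor C n).Additive] [Pretriangulated C] in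
open ZeroObject in
theorem zero (hN0 : ∀ X : C, IsZero X → X ∈ N) : FactorsThru N (0 : X ⟶ Y) :=
  ⟨0, hN0 0 (isZero_zero C), 0, 0, by simp⟩

theorem add
    (hNext : ∀ T : Triangle C, T ∈ distTriang C → T.obj₁ ∈ N → T.obj₃ ∈ N → T.obj₂ ∈ N)
    {f f' : X ⟶ Y} (hf : FactorsThru N f) (hf' : FactorsThru N f') :
    FactorsThru N (f + f') := by
  obtain ⟨Z, hZ, u, v, rfl⟩ := hf
  obtain ⟨Z', hZ', u', v', rfl⟩ := hf'
  exact ⟨Z ⊞ Z', hNext _ (binaryBiproductTriangle_distinguished Z Z') hZ hZ',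
    biprod.lift u u', biprod.desc v v', by simp⟩

end FactorsThru

theorem factorsThru_of_factorsThru_comp_mor₂ {N : Set C}
    (hNext : ∀ T : Triangle C, T ∈ distTriang C → T.obj₁ ∈ N → T.obj₃ ∈ N → T.obj₂ ∈ N)
    {M X X' : C} {b : M ⟶ X} {c : X ⟶ X'} {δ : X' ⟶ M⟦(1:ℤ)⟧}
    (hT : Triangle.mk b c δ ∈ distTriang C) (hM : M ∈ N) {Y : C} {x : Y ⟶ X}
    (hx : FactorsThru N (x ≫ c)) : FactorsThru N x := by
  obtain ⟨Z, hZ, u, w, hxc⟩ := hx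
  have hcδ : c ≫ δ = 0 := comp_distTriang_mor_zero₂₃ _ hT
  obtain ⟨E, e, q, hE⟩ := distinguished_cocone_triangle₂ (w ≫ δ)
  obtain ⟨π, -, hπ⟩ : ∃ π : E ⟶ X, _ ∧ q ≫ w = π ≫ c :=
    complete_distinguished_triangle_morphism₂ _ _ hE hT (𝟙 M) w
      (show (w ≫ δ) ≫ (𝟙 M)⟦(1:ℤ)⟧' = w ≫ δ by simp)
  obtain ⟨ρ, hρ⟩ : ∃ ρ : Y ⟶ E, u = ρ ≫ q := Triangle.coyoneda_exact₃ _ hE u <|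
    show u ≫ w ≫ δ = 0 by
      rw [← Category.assoc, ← hxc, Category.assoc, hcδ, comp_zero]
  obtain ⟨m, hm⟩ : ∃ m : Y ⟶ M, x - ρ ≫ π = m ≫ b :=
    Triangle.coyoneda_exact₂ _ hT (x - ρ ≫ π) <| show (x - ρ ≫ π) ≫ c = 0 by
      rw [Preadditive.sub_comp, Category.assoc, ← hπ, ← Category.assoc, ← hρ, hxc, sub_self]
  rw [show x = ρ ≫ π + m ≫ b by rw [← hm]; abel]
  exact FactorsThru.add hNext ⟨E, hNext _ hE hM hZ, ρ, π, rfl⟩ ⟨M, hM, m, b, rfl⟩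

theorem stmt3 (N : Set C)
    (hN0 : ∀ X : C, Limits.IsZero X → X ∈ N)
    (hNext : ∀ (T : Triangle C), (T ∈ distTriang C) → T.obj₁ ∈ N → T.obj₃ ∈ N → T.obj₂ ∈ N)
    {A B C₀ : C} (f : A ⟶ B) (g : B ⟶ C₀) (h : C₀ ⟶ A⟦(1:ℤ)⟧)
    (hT : Triangle.mk f g h ∈ distTriang C) :
    FactorsThru N h ↔
      ∀ ⦃X : C⦄ (x : C₀ ⟶ X), FactorsThru N (g ≫ x) → FactorsThru N x := by
  constructor
  · rintro hh X x ⟨M, hM, a, b, hab⟩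
    obtain ⟨X', c, δ, hbc⟩ := distinguished_cocone_triangle b
    obtain ⟨φ, hφ, -⟩ := complete_distinguished_triangle_morphism _ (Triangle.mk b c δ)
      (rot_of_distTriang _ hT) hbc a x hab
    refine factorsThru_of_factorsThru_comp_mor₂ hNext hbc hM ?_
    exact (hφ : h ≫ φ = x ≫ c) ▸ hh.comp_right φ
  · intro H
    have hgh : g ≫ h = 0 := comp_distTriang_mor_zero₂₃ _ hT
    exact H h (hgh ▸ FactorsThru.zero hN0)
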